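/- Finite-horizon approximation (Lemma 5, deterministic core): let θ be a stable gain with stability constants c > 0 and r ∈ (0,1) (i.e., ‖C_θᵗ‖ ≤ c rᵗ γ^{−t/2} for all t ≥ 0), and let Σ₁ be positive semidefinite. Define the truncated covariance Σ̃_{θ,T} := (1−γ) ∑_{t=0}^{T−1} γᵗ C_θᵗ Σ₁ (C_θᵀ)ᵗ and the truncated cost J̃_T(θ) := (1−γ) ∑_{t=0}^{T−1} γᵗ tr( (Q + θᵀRθ) C_θᵗ Σ₁ (C_θᵀ)ᵗ ). Then for every T ≥ 1: ‖Σ_θ − Σ̃_{θ,T}‖ ≤ (1−γ) c² ‖Σ₁‖ r^{2T} / (1 − r²), and | J(θ) − J̃_T(θ) | ≤ ( ‖Q‖ + ‖R‖ ‖θ‖² ) · (1−γ) c² tr(Σ₁) r^{2T} / (1 − r²). -/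

import Mathlib

/-!
With `C = A - Bθ`, the stability bound gives `γᵗ ‖Cᵗ‖² ≤ c² (r²)ᵗ`, so the `t`-th terms of the
series defining `Σ_θ` and `J(θ)` are dominated by a geometric sequence of ratio `r²`, and both
truncation errors are geometric tails. For the cost, the term `γᵗ tr(K Cᵗ Σ₁ (Cᵀ)ᵗ)` with
`K = Q + θᵀRθ` is controlled through `|tr(K X)| ≤ ‖K‖ tr X` for `X ⪰ 0` (write `X = BᵀB` and
bound the quadratic form of `K` on each row of `B`) and `tr(Cᵗ Σ₁ (Cᵀ)ᵗ) ≤ ‖Cᵗ‖² tr Σ₁`.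
-/

open Matrix
open scoped Matrix.Norms.L2Operator

noncomputable section

/-- The closed-loop matrix `C_θ = A - B θ`. -/
def Cl {dx du : ℕ} (A : Matrix (Fin dx) (Fin dx) ℝ) (B : Matrix (Fin dx) (Fin du) ℝ)
    (θ : Matrix (Fin du) (Fin dx) ℝ) : Matrix (Fin dx) (Fin dx) ℝ :=
  A - B * θ

/-- A closed-loop matrix `C` is stable (for discount factor `γ`) if
`‖C^t‖ ≤ c rᵗ γ^{-t/2}` (L2 operator norm) for some `c > 0` and `r ∈ (0,1)`. -/
def IsStable (γ : ℝ) {dx : ℕ} (C : Matrix (Fin dx) (Fin dx) ℝ) : Prop :=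
  ∃ c > (0:ℝ), ∃ r ∈ Set.Ioo (0:ℝ) 1, ∀ t : ℕ, ‖C ^ t‖ ≤ c * r ^ t * γ ^ (-(t : ℝ) / 2)

/-- `M(θ) := ∑_{t=0}^∞ γᵗ (C_θᵀ)ᵗ (Q + θᵀ R θ) C_θᵗ`. -/
def Mmat {dx du : ℕ} (γ : ℝ) (A : Matrix (Fin dx) (Fin dx) ℝ) (B : Matrix (Fin dx) (Fin du) ℝ)
    (Q : Matrix (Fin dx) (Fin dx) ℝ) (R : Matrix (Fin du) (Fin du) ℝ)
    (θ : Matrix (Fin du) (Fin dx) ℝ) : Matrix (Fin dx) (Fin dx) ℝ :=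
  ∑' t : ℕ, γ ^ t • ((Cl A B θ)ᵀ ^ t * (Q + θᵀ * R * θ) * Cl A B θ ^ t)

/-- `Σ_θ := (1-γ) ∑_{t=0}^∞ γᵗ C_θᵗ Σ₁ (C_θᵀ)ᵗ`. -/
def SigMat {dx du : ℕ} (γ : ℝ) (A : Matrix (Fin dx) (Fin dx) ℝ) (B : Matrix (Fin dx) (Fin du) ℝ)
    (S1 : Matrix (Fin dx) (Fin dx) ℝ) (θ : Matrix (Fin du) (Fin dx) ℝ) :
    Matrix (Fin dx) (Fin dx) ℝ :=
  (1 - γ) • ∑' t : ℕ, γ ^ t • (Cl A B θ ^ t * S1 * (Cl A B θ)ᵀ ^ t)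

/-- `E_θ := (R + γ Bᵀ M(θ) B) θ - γ Bᵀ M(θ) A`. -/
def Emat {dx du : ℕ} (γ : ℝ) (A : Matrix (Fin dx) (Fin dx) ℝ) (B : Matrix (Fin dx) (Fin du) ℝ)
    (Q : Matrix (Fin dx) (Fin dx) ℝ) (R : Matrix (Fin du) (Fin du) ℝ)
    (θ : Matrix (Fin du) (Fin dx) ℝ) : Matrix (Fin du) (Fin dx) ℝ :=
  (R + γ • (Bᵀ * Mmat γ A B Q R θ * B)) * θ - γ • (Bᵀ * Mmat γ A B Q R θ * A)

/-- `J(θ) := (1-γ) tr(M(θ) Σ₁)`. -/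
def Jcost {dx du : ℕ} (γ : ℝ) (A : Matrix (Fin dx) (Fin dx) ℝ) (B : Matrix (Fin dx) (Fin du) ℝ)
    (Q : Matrix (Fin dx) (Fin dx) ℝ) (R : Matrix (Fin du) (Fin du) ℝ)
    (S1 : Matrix (Fin dx) (Fin dx) ℝ) (θ : Matrix (Fin du) (Fin dx) ℝ) : ℝ :=
  (1 - γ) * (Mmat γ A B Q R θ * S1).trace

/-- The smallest singular value of a square matrix, as the infimum of `‖Ax‖` over unit vectors. -/
def sigmaMin {m : Type*} [Fintype m] [DecidableEq m] (A : Matrix m m ℝ) : ℝ :=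
  ⨅ x : {x : EuclideanSpace ℝ m // ‖x‖ = 1}, ‖Matrix.toEuclideanLin A x.1‖

/-- The Frobenius norm of a matrix. -/
def frobNorm {m n : Type*} [Fintype m] [Fintype n] (A : Matrix m n ℝ) : ℝ :=
  Real.sqrt (∑ i, ∑ j, A i j ^ 2)

namespace Matrix

variable {m n : Type*} [Fintype m] [Fintype n]

theorem abs_dotProduct_mulVec_le [DecidableEq n] (K : Matrix n n ℝ) (x : EuclideanSpace ℝ n) :
    |x.ofLp ⬝ᵥ K *ᵥ x.ofLp| ≤ ‖K‖ * ‖x‖ ^ 2 := by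
  have hinner : x.ofLp ⬝ᵥ K *ᵥ x.ofLp =
      inner ℝ ((EuclideanSpace.equiv n ℝ).symm (K *ᵥ x.ofLp)) x := by
    rw [EuclideanSpace.inner_eq_star_dotProduct]; rfl
  calc |x.ofLp ⬝ᵥ K *ᵥ x.ofLp|
      ≤ ‖(EuclideanSpace.equiv n ℝ).symm (K *ᵥ x.ofLp)‖ * ‖x‖ :=
        hinner ▸ abs_real_inner_le_norm _ _
    _ ≤ ‖K‖ * ‖x‖ * ‖x‖ := by gcongr; exact K.l2_opNorm_mulVec x
    _ = ‖K‖ * ‖x‖ ^ 2 := by ring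

theorem trace_mul_mul_transpose_eq_sum (B : Matrix m n ℝ) (K : Matrix n n ℝ) :
    (B * K * Bᵀ).trace = ∑ i, B i ⬝ᵥ K *ᵥ B i := by
  refine Finset.sum_congr rfl fun i _ => ?_
  simp only [diag_apply, mul_apply, transpose_apply, dotProduct, mulVec, Finset.mul_sum,
    Finset.sum_mul]
  rw [Finset.sum_comm]
  exact Finset.sum_congr rfl fun j _ => Finset.sum_congr rfl fun k _ => by ring

open scoped MatrixOrder in
theorem abs_trace_mul_le_of_posSemidef [DecidableEq n] (K : Matrix n n ℝ) {X : Matrix n n ℝ}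
    (hX : X.PosSemidef) : |(K * X).trace| ≤ ‖K‖ * X.trace := by
  obtain ⟨B, rfl⟩ := CStarAlgebra.nonneg_iff_eq_star_mul_self.mp hX.nonneg
  rw [star_eq_conjTranspose, conjTranspose_eq_transpose_of_trivial]
  have hnorm (i : n) : ‖WithLp.toLp 2 (B i)‖ ^ 2 = B i ⬝ᵥ (1 : Matrix n n ℝ) *ᵥ B i := by
    rw [← real_inner_self_eq_norm_sq, EuclideanSpace.inner_eq_star_dotProduct, one_mulVec]; rfl
  have htrace : (Bᵀ * B).trace = ∑ i, ‖WithLp.toLp 2 (B i)‖ ^ 2 := by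
    simp only [hnorm, ← trace_mul_mul_transpose_eq_sum, mul_one, trace_mul_comm B]
  rw [← mul_assoc, trace_mul_comm, ← mul_assoc, trace_mul_mul_transpose_eq_sum, htrace,
    Finset.mul_sum]
  exact (Finset.abs_sum_le_sum_abs _ _).trans
    (Finset.sum_le_sum fun i _ => abs_dotProduct_mulVec_le K (WithLp.toLp 2 (B i)))

theorem trace_mul_mul_transpose_le [DecidableEq n] (M : Matrix m n ℝ) {S : Matrix n n ℝ}
    (hS : S.PosSemidef) : (M * S * Mᵀ).trace ≤ ‖M‖ ^ 2 * S.trace :=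
  calc (M * S * Mᵀ).trace = (Mᵀ * M * S).trace := by rw [trace_mul_comm, Matrix.mul_assoc]
    _ ≤ ‖Mᵀ * M‖ * S.trace := (le_abs_self _).trans (abs_trace_mul_le_of_posSemidef _ hS)
    _ = ‖M‖ ^ 2 * S.trace := by
        rw [← conjTranspose_eq_transpose_of_trivial, l2_opNorm_conjTranspose_mul_self, sq]

variable [DecidableEq m] [DecidableEq n]

theorem l2_opNorm_transpose (M : Matrix m n ℝ) : ‖Mᵀ‖ = ‖M‖ := by
  rw [← conjTranspose_eq_transpose_of_trivial, l2_opNorm_conjTranspose]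

theorem l2_opNorm_transpose_mul_mul_le (M : Matrix m n ℝ) (K : Matrix m m ℝ) :
    ‖Mᵀ * K * M‖ ≤ ‖M‖ ^ 2 * ‖K‖ :=
  calc ‖Mᵀ * K * M‖ ≤ ‖Mᵀ‖ * ‖K‖ * ‖M‖ :=
        (l2_opNorm_mul _ _).trans (by gcongr; exact l2_opNorm_mul _ _)
    _ = ‖M‖ ^ 2 * ‖K‖ := by rw [l2_opNorm_transpose]; ring

end Matrix

theorem pow_mul_sq_le_of_le_mul_rpow {γ c r x : ℝ} {t : ℕ} (hγ : 0 < γ) (hx : 0 ≤ x)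
    (h : x ≤ c * r ^ t * γ ^ (-(t : ℝ) / 2)) : γ ^ t * x ^ 2 ≤ c ^ 2 * (r ^ 2) ^ t := by
  have hγt : (γ ^ (-(t : ℝ) / 2)) ^ 2 * γ ^ t = 1 := by
    rw [← Real.rpow_natCast γ t, ← Real.rpow_natCast (γ ^ (-(t : ℝ) / 2)) 2,
      ← Real.rpow_mul hγ.le, ← Real.rpow_add hγ]
    norm_num
  calc γ ^ t * x ^ 2 ≤ γ ^ t * (c * r ^ t * γ ^ (-(t : ℝ) / 2)) ^ 2 := by gcongr
    _ = c ^ 2 * (r ^ 2) ^ t * ((γ ^ (-(t : ℝ) / 2)) ^ 2 * γ ^ t) := by ring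
    _ = c ^ 2 * (r ^ 2) ^ t := by rw [hγt, mul_one]

theorem norm_smul_sub_smul_sum_range_le {E : Type*} [NormedAddCommGroup E] [NormedSpace ℝ E]
    {f : ℕ → E} {a : E} {s B q : ℝ} (ha : HasSum f a) (hs : 0 ≤ s) (hq : q < 1)
    (hf : ∀ t, ‖f t‖ ≤ B * q ^ t) (T : ℕ) :
    ‖s • a - s • ∑ t ∈ Finset.range T, f t‖ ≤ s * (B * q ^ T / (1 - q)) := by
  rw [← smul_sub, norm_smul, Real.norm_of_nonneg hs, norm_sub_rev]
  exact mul_le_mul_of_nonneg_left (norm_sub_le_of_geometric_bound_of_hasSum hq hf ha T) hs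

section DiscountedSeries

variable {n : Type*} [Fintype n] [DecidableEq n] {γ b q : ℝ} {C : Matrix n n ℝ}

theorem norm_discounted_transpose_conj_le (hγ : 0 ≤ γ)
    (hC : ∀ t, γ ^ t * ‖C ^ t‖ ^ 2 ≤ b * q ^ t) (K : Matrix n n ℝ) (t : ℕ) :
    ‖γ ^ t • (Cᵀ ^ t * K * C ^ t)‖ ≤ b * ‖K‖ * q ^ t := by
  rw [norm_smul, Real.norm_of_nonneg (pow_nonneg hγ t), ← transpose_pow]
  calc γ ^ t * ‖(C ^ t)ᵀ * K * C ^ t‖ ≤ γ ^ t * (‖C ^ t‖ ^ 2 * ‖K‖) := by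
        gcongr; exact l2_opNorm_transpose_mul_mul_le _ _
    _ ≤ b * q ^ t * ‖K‖ := by
        rw [← mul_assoc]; exact mul_le_mul_of_nonneg_right (hC t) (norm_nonneg K)
    _ = b * ‖K‖ * q ^ t := by ring

theorem norm_discounted_conj_le (hγ : 0 ≤ γ) (hC : ∀ t, γ ^ t * ‖C ^ t‖ ^ 2 ≤ b * q ^ t)
    (S : Matrix n n ℝ) (t : ℕ) : ‖γ ^ t • (C ^ t * S * Cᵀ ^ t)‖ ≤ b * ‖S‖ * q ^ t := by
  have hCt (t : ℕ) : γ ^ t * ‖Cᵀ ^ t‖ ^ 2 ≤ b * q ^ t := by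
    rw [← transpose_pow, l2_opNorm_transpose]; exact hC t
  simpa only [transpose_transpose] using norm_discounted_transpose_conj_le hγ hCt S t

theorem abs_discounted_trace_le (hγ : 0 ≤ γ) (hC : ∀ t, γ ^ t * ‖C ^ t‖ ^ 2 ≤ b * q ^ t)
    (K : Matrix n n ℝ) {S : Matrix n n ℝ} (hS : S.PosSemidef) (t : ℕ) :
    |γ ^ t * (K * (C ^ t * S * Cᵀ ^ t)).trace| ≤ ‖K‖ * (b * S.trace) * q ^ t := by
  have hconj : (C ^ t * S * Cᵀ ^ t).PosSemidef := by
    simpa only [conjTranspose_eq_transpose_of_trivial, transpose_pow] using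
      hS.mul_mul_conjTranspose_same (C ^ t)
  rw [abs_mul, abs_of_nonneg (pow_nonneg hγ t)]
  calc γ ^ t * |(K * (C ^ t * S * Cᵀ ^ t)).trace|
      ≤ γ ^ t * (‖K‖ * (‖C ^ t‖ ^ 2 * S.trace)) := by
        gcongr
        calc |(K * (C ^ t * S * Cᵀ ^ t)).trace| ≤ ‖K‖ * (C ^ t * S * Cᵀ ^ t).trace :=
              abs_trace_mul_le_of_posSemidef K hconj
          _ ≤ ‖K‖ * (‖C ^ t‖ ^ 2 * S.trace) := by
              gcongr; simpa only [transpose_pow] using trace_mul_mul_transpose_le (C ^ t) hS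
    _ = ‖K‖ * S.trace * (γ ^ t * ‖C ^ t‖ ^ 2) := by ring
    _ ≤ ‖K‖ * S.trace * (b * q ^ t) :=
        mul_le_mul_of_nonneg_left (hC t) (mul_nonneg (norm_nonneg K) hS.trace_nonneg)
    _ = ‖K‖ * (b * S.trace) * q ^ t := by ring

variable (hγ₀ : 0 ≤ γ) (hγ₁ : γ ≤ 1) (hq₀ : 0 ≤ q) (hq₁ : q < 1)
  (hC : ∀ t, γ ^ t * ‖C ^ t‖ ^ 2 ≤ b * q ^ t)
include hγ₀ hγ₁ hq₀ hq₁ hC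

theorem norm_discounted_covariance_sub_truncation_le (S : Matrix n n ℝ) (T : ℕ) :
    ‖(1 - γ) • ∑' t, γ ^ t • (C ^ t * S * Cᵀ ^ t) -
        (1 - γ) • ∑ t ∈ Finset.range T, γ ^ t • (C ^ t * S * Cᵀ ^ t)‖
      ≤ (1 - γ) * b * ‖S‖ * q ^ T / (1 - q) := by
  have hsum : Summable fun t => γ ^ t • (C ^ t * S * Cᵀ ^ t) :=
    .of_norm_bounded ((summable_geometric_of_lt_one hq₀ hq₁).mul_left _)
      (norm_discounted_conj_le hγ₀ hC S)
  convert norm_smul_sub_smul_sum_range_le hsum.hasSum (sub_nonneg.mpr hγ₁) hq₁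
    (norm_discounted_conj_le hγ₀ hC S) T using 1
  ring

theorem abs_discounted_cost_sub_truncation_le (K : Matrix n n ℝ) {S : Matrix n n ℝ}
    (hS : S.PosSemidef) (T : ℕ) :
    |(1 - γ) * ((∑' t, γ ^ t • (Cᵀ ^ t * K * C ^ t)) * S).trace -
        (1 - γ) * ∑ t ∈ Finset.range T, γ ^ t * (K * (C ^ t * S * Cᵀ ^ t)).trace|
      ≤ ‖K‖ * ((1 - γ) * b * S.trace * q ^ T / (1 - q)) := by
  have hsum : Summable fun t => γ ^ t • (Cᵀ ^ t * K * C ^ t) :=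
    .of_norm_bounded ((summable_geometric_of_lt_one hq₀ hq₁).mul_left _)
      (norm_discounted_transpose_conj_le hγ₀ hC K)
  have hcost : HasSum (fun t => γ ^ t * (K * (C ^ t * S * Cᵀ ^ t)).trace)
      ((∑' t, γ ^ t • (Cᵀ ^ t * K * C ^ t)) * S).trace := by
    convert (hsum.hasSum.mul_right S).map (traceAddMonoidHom n ℝ) continuous_id.matrix_trace
      using 1
    · funext t
      simp only [Function.comp_apply, traceAddMonoidHom_apply, smul_mul_assoc, trace_smul,
        smul_eq_mul, Matrix.mul_assoc]
      rw [trace_mul_comm (Cᵀ ^ t)]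
      simp only [Matrix.mul_assoc]
    · rfl
  have := norm_smul_sub_smul_sum_range_le hcost (sub_nonneg.mpr hγ₁) hq₁
    (fun t => (Real.norm_eq_abs _).trans_le (abs_discounted_trace_le hγ₀ hC K hS t)) T
  simp only [smul_eq_mul, Real.norm_eq_abs] at this
  convert this using 1
  ring

end DiscountedSeries

theorem finite_horizon_approximation
    {dx du : ℕ} (γ : ℝ) (hγ : γ ∈ Set.Ioo (0:ℝ) 1)
    (A : Matrix (Fin dx) (Fin dx) ℝ) (B : Matrix (Fin dx) (Fin du) ℝ)
    (Q : Matrix (Fin dx) (Fin dx) ℝ) (R : Matrix (Fin du) (Fin du) ℝ)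
    (S1 : Matrix (Fin dx) (Fin dx) ℝ)
    (hS1 : S1.PosSemidef)
    (θ : Matrix (Fin du) (Fin dx) ℝ)
    (c r : ℝ) (hr : r ∈ Set.Ioo (0:ℝ) 1)
    (hstab : ∀ t : ℕ, ‖Cl A B θ ^ t‖ ≤ c * r ^ t * γ ^ (-(t : ℝ) / 2))
    (T : ℕ) :
    ‖SigMat γ A B S1 θ -
        (1 - γ) • ∑ t ∈ Finset.range T, γ ^ t • (Cl A B θ ^ t * S1 * (Cl A B θ)ᵀ ^ t)‖
      ≤ (1 - γ) * c ^ 2 * ‖S1‖ * r ^ (2 * T) / (1 - r ^ 2)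
    ∧ |Jcost γ A B Q R S1 θ -
        (1 - γ) * ∑ t ∈ Finset.range T,
          γ ^ t * ((Q + θᵀ * R * θ) * (Cl A B θ ^ t * S1 * (Cl A B θ)ᵀ ^ t)).trace|
      ≤ (‖Q‖ + ‖R‖ * ‖θ‖ ^ 2) * ((1 - γ) * c ^ 2 * S1.trace * r ^ (2 * T) / (1 - r ^ 2)) := by
  obtain ⟨hγ₀, hγ₁⟩ := hγ
  have hq₁ : r ^ 2 < 1 := pow_lt_one₀ hr.1.le hr.2 two_ne_zero
  have hdecay (t : ℕ) : γ ^ t * ‖Cl A B θ ^ t‖ ^ 2 ≤ c ^ 2 * (r ^ 2) ^ t :=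
    pow_mul_sq_le_of_le_mul_rpow hγ₀ (norm_nonneg _) (hstab t)
  have hK : ‖Q + θᵀ * R * θ‖ ≤ ‖Q‖ + ‖R‖ * ‖θ‖ ^ 2 :=
    (norm_add_le _ _).trans (by grw [l2_opNorm_transpose_mul_mul_le, mul_comm])
  have hcov := norm_discounted_covariance_sub_truncation_le hγ₀.le hγ₁.le (sq_nonneg r) hq₁
    hdecay S1 T
  have hcost := abs_discounted_cost_sub_truncation_le hγ₀.le hγ₁.le (sq_nonneg r) hq₁ hdecay
    (Q + θᵀ * R * θ) hS1 T
  have htail : 0 ≤ (1 - γ) * c ^ 2 * S1.trace * (r ^ 2) ^ T / (1 - r ^ 2) :=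
    div_nonneg (mul_nonneg (mul_nonneg (mul_nonneg (sub_nonneg.mpr hγ₁.le) (sq_nonneg c))
      hS1.trace_nonneg) (pow_nonneg (sq_nonneg r) T)) (sub_pos.mpr hq₁).le
  rw [pow_mul]
  exact ⟨hcov, hcost.trans (mul_le_mul_of_nonneg_right hK htail)⟩
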